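/- arXiv:1503.00455 — 3 statements merged into one kernel-verified Lean document; each statement's English description precedes it below -/
import Mathlib

section
/- Let m > 0 and a > 0. Among all functions v in H^1(ℝ) with ∫_ℝ |v|^2 dx ≤ m and v(0) = a, the function u(x) = a·exp(-a²|x|/m) minimizes the Dirichlet energy ∫_ℝ |v'|² dx, and the minimal value is a⁴/m. -/
open MeasureTheory Real Filter Topology

/-!
If `v` and `v'` are square integrable then `v²` vanishes at `±∞`, so integrating `(v²)' = 2 v v'`
over each half-line from `0` gives `v(0)² ≤ ∫ |v v'|`. Cauchy–Schwarz then yields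
`a⁴ ≤ ‖v‖₂² ‖v'‖₂² ≤ m ‖v'‖₂²`. For `u = a e^{-a²|x|/m}` one has `|u'| = (a²/m) u`, so this
chain is an equality and `‖u‖₂² = m`.
-/

theorem integral_exp_neg_mul_abs {c : ℝ} (hc : 0 < c) : ∫ x, exp (-c * |x|) = 2 / c := by
  rw [integral_comp_abs (f := fun x => exp (-c * x)), integral_exp_mul_Ioi (by linarith)]
  field_simp
  simp

theorem integral_sq_mul_exp_neg_mul_abs (C : ℝ) {c : ℝ} (hc : 0 < c) :
    ∫ x, (C * exp (-c * |x|)) ^ 2 = C ^ 2 / c := by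
  have hsq : ∀ x : ℝ, (C * exp (-c * |x|)) ^ 2 = C ^ 2 * exp (-(2 * c) * |x|) := fun x => by
    rw [mul_pow, ← exp_nat_mul]; ring_nf
  simp_rw [hsq, integral_const_mul, integral_exp_neg_mul_abs (by positivity : 0 < 2 * c)]
  field_simp

section CauchySchwarz

variable {α : Type*} [MeasurableSpace α] {μ : Measure α} {f g : α → ℝ}

theorem sq_integral_abs_mul_le (hf : MemLp f 2 μ) (hg : MemLp g 2 μ) :
    (∫ x, |f x * g x| ∂μ) ^ 2 ≤ (∫ x, f x ^ 2 ∂μ) * ∫ x, g x ^ 2 ∂μ := by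
  have h := integral_mul_norm_le_Lp_mul_Lq (μ := μ) Real.HolderConjugate.two_two
    (by simpa using hf) (by simpa using hg)
  simp only [norm_eq_abs, ← abs_mul, rpow_two, sq_abs, ← sqrt_eq_rpow] at h
  calc (∫ x, |f x * g x| ∂μ) ^ 2
      ≤ (√(∫ x, f x ^ 2 ∂μ) * √(∫ x, g x ^ 2 ∂μ)) ^ 2 :=
        pow_le_pow_left₀ (integral_nonneg fun _ => abs_nonneg _) h 2
    _ = (∫ x, f x ^ 2 ∂μ) * ∫ x, g x ^ 2 ∂μ := by
        rw [mul_pow, sq_sqrt (integral_nonneg fun _ => sq_nonneg _),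
          sq_sqrt (integral_nonneg fun _ => sq_nonneg _)]

end CauchySchwarz

theorem two_mul_abs_le_integral_abs_deriv {g g' : ℝ → ℝ} (hg : ∀ x, HasDerivAt g (g' x) x)
    (hg' : Integrable g') (hbot : Tendsto g atBot (𝓝 0)) (htop : Tendsto g atTop (𝓝 0))
    (x₀ : ℝ) : 2 * |g x₀| ≤ ∫ x, |g' x| := by
  have hIic : ∫ x in Set.Iic x₀, g' x = g x₀ :=
    (integral_Iic_of_hasDerivAt_of_tendsto' (fun x _ => hg x) hg'.integrableOn hbot).trans
      (sub_zero _)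
  have hIoi : ∫ x in Set.Ioi x₀, g' x = -g x₀ :=
    (integral_Ioi_of_hasDerivAt_of_tendsto' (fun x _ => hg x) hg'.integrableOn htop).trans
      (zero_sub _)
  have hleft : |g x₀| ≤ ∫ x in Set.Iic x₀, |g' x| := by
    rw [← hIic]; exact abs_integral_le_integral_abs
  have hright : |g x₀| ≤ ∫ x in Set.Ioi x₀, |g' x| := by
    rw [← abs_neg, ← hIoi]; exact abs_integral_le_integral_abs
  rw [← intervalIntegral.integral_Iic_add_Ioi hg'.abs.integrableOn hg'.abs.integrableOn]
  linarith

theorem sq_le_integral_abs_mul_deriv {v v' : ℝ → ℝ} (hv : ∀ x, HasDerivAt v (v' x) x)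
    (hv2 : MemLp v 2 volume) (hv'2 : MemLp v' 2 volume) (x₀ : ℝ) :
    v x₀ ^ 2 ≤ ∫ x, |v x * v' x| := by
  have hd : ∀ x, HasDerivAt (fun x => v x ^ 2) (2 * (v x * v' x)) x := fun x => by
    simpa [mul_assoc] using (hv x).fun_pow 2
  have hsq : Integrable (fun x => v x ^ 2) := hv2.integrable_sq
  have hd_int : Integrable (fun x => 2 * (v x * v' x)) := (hv2.integrable_mul hv'2).const_mul 2
  have hbot := tendsto_zero_of_hasDerivAt_of_integrableOn_Iic (a := 0) (fun x _ => hd x)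
    hd_int.integrableOn hsq.integrableOn
  have htop := tendsto_zero_of_hasDerivAt_of_integrableOn_Ioi (a := 0) (fun x _ => hd x)
    hd_int.integrableOn hsq.integrableOn
  simpa [abs_mul, integral_const_mul] using two_mul_abs_le_integral_abs_deriv hd hd_int hbot htop x₀

/-- Among all `v ∈ H¹(ℝ)` with `∫ v² ≤ m` and `v 0 = a`, the function
`u x = a * exp (-a² |x| / m)` minimizes the Dirichlet energy, with minimal value `a⁴ / m`. -/
theorem stmt_0 (m a : ℝ) (hm : 0 < m) (ha : 0 < a) :
    (∫ x : ℝ, ((a ^ 2 / m) * (a * Real.exp (-(a ^ 2) * |x| / m))) ^ 2) = a ^ 4 / m ∧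
    (∫ x : ℝ, (a * Real.exp (-(a ^ 2) * |x| / m)) ^ 2) ≤ m ∧
    a * Real.exp (-(a ^ 2) * |(0 : ℝ)| / m) = a ∧
    ∀ v v' : ℝ → ℝ, (∀ x, HasDerivAt v (v' x) x) →
      MemLp v 2 (volume : Measure ℝ) → MemLp v' 2 (volume : Measure ℝ) →
      (∫ x : ℝ, (v x) ^ 2) ≤ m → v 0 = a →
      a ^ 4 / m ≤ ∫ x : ℝ, (v' x) ^ 2 := by
  have hk : 0 < a ^ 2 / m := by positivity
  have hexp : ∀ x : ℝ, -(a ^ 2) * |x| / m = -(a ^ 2 / m) * |x| := fun x => by ring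
  simp only [hexp, ← mul_assoc]
  refine ⟨?_, ?_, by simp, ?_⟩
  · rw [integral_sq_mul_exp_neg_mul_abs _ hk]
    field_simp
  · rw [integral_sq_mul_exp_neg_mul_abs _ hk]
    exact (by field_simp : a ^ 2 / (a ^ 2 / m) = m).le
  · intro v v' hv hv2 hv'2 hvm hv0
    have hpoint := sq_le_integral_abs_mul_deriv hv hv2 hv'2 0
    have henergy : 0 ≤ ∫ x, v' x ^ 2 := integral_nonneg fun _ => sq_nonneg _
    rw [hv0] at hpoint
    rw [div_le_iff₀' hm]
    calc a ^ 4 = (a ^ 2) ^ 2 := by ring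
      _ ≤ (∫ x, |v x * v' x|) ^ 2 := pow_le_pow_left₀ (sq_nonneg a) hpoint 2
      _ ≤ (∫ x, v x ^ 2) * ∫ x, v' x ^ 2 := sq_integral_abs_mul_le hv2 hv'2
      _ ≤ m * ∫ x, v' x ^ 2 := mul_le_mul_of_nonneg_right hvm henergy
end

section
/- Let p ∈ (4,6), μ > 0, N a positive integer, and C_p = [(p(p−4)/16)^{2/(p−2)} + (p/8)(p(p−4)/16)^{(4−p)/(p−2)}]^{(p−2)/(6−p)}. If L > C_p · N^{4/(6−p)} · μ^{−(p−2)/(6−p)}, then the point ā = (N²p(p−4)/(16L²))^{1/(p−2)} satisfies ā < √(μ/L) and a²L + (N²p/(8L))·a^{4−p} < μ at a = ā. -/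
/-!
At `ā` we have `ā ^ (p - 2) = N² p (p - 4) / (16 L²)` (the critical point of `g`), which makes the
second term of `g(ā)` equal to `2 / (p - 4)` times the first, so `g(ā) = (p - 2)/(p - 4) · ā² L`.
Expanding `ā` turns this into `B N^(4/(p-2)) / L^((6-p)/(p-2))`, where `B` is the base of the power
defining `C_p`; raising the threshold inequality to the power `(6 - p)/(p - 2)` is then exactly
`g(ā) < μ`. Finally `ā² L ≤ g(ā) < μ` gives `ā < √(μ/L)`.
-/

open Real

/-- `g(a)` in the paper. -/
noncomputable def trialEnergy (p n L a : ℝ) : ℝ :=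
  a ^ 2 * L + (n ^ 2 * p / (8 * L)) * a ^ (4 - p)

theorem trialEnergy_eq_of_rpow_sub_two_eq {p n L a : ℝ} (ha : 0 ≤ a) (hL : L ≠ 0) (hp : p ≠ 4)
    (hcrit : a ^ (p - 2) = n ^ 2 * p * (p - 4) / (16 * L ^ 2)) :
    trialEnergy p n L a = (p - 2) / (p - 4) * (a ^ 2 * L) := by
  have hsplit : a ^ 2 = a ^ (4 - p) * a ^ (p - 2) := by
    rw [← rpow_add' ha (by ring_nf; norm_num), ← rpow_two]
    ring_nf
  have hp4 : p - 4 ≠ 0 := sub_ne_zero.2 hp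
  rw [trialEnergy, hsplit, hcrit]
  field_simp
  ring

theorem cp_base_eq {p : ℝ} (hp : 4 < p) :
    (p * (p - 4) / 16) ^ (2 / (p - 2)) + (p / 8) * (p * (p - 4) / 16) ^ ((4 - p) / (p - 2))
      = (p - 2) / (p - 4) * (p * (p - 4) / 16) ^ (2 / (p - 2)) := by
  have hp4 : 0 < p - 4 := by linarith
  have hp2 : p - 2 ≠ 0 := by linarith
  have hk : 0 < p * (p - 4) / 16 := by positivity
  rw [show (4 - p) / (p - 2) = 2 / (p - 2) - 1 by field_simp; ring, rpow_sub_one hk.ne']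
  field_simp
  ring

theorem sq_rpow_critical {p n L : ℝ} (hp : 4 < p) (hn : 0 ≤ n) (hL : 0 ≤ L) :
    ((n ^ 2 * p * (p - 4) / (16 * L ^ 2)) ^ (1 / (p - 2))) ^ 2
      = (p * (p - 4) / 16) ^ (2 / (p - 2)) * n ^ (4 / (p - 2)) / L ^ (4 / (p - 2)) := by
  have hk : 0 ≤ p * (p - 4) / 16 := by
    have : 0 ≤ p - 4 := by linarith
    positivity
  have h2 : 1 / (p - 2) * ((2 : ℕ) : ℝ) = 2 / (p - 2) := by push_cast; ring
  have h4 : ((2 : ℕ) : ℝ) * (2 / (p - 2)) = 4 / (p - 2) := by push_cast; ring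
  rw [show n ^ 2 * p * (p - 4) / (16 * L ^ 2) = p * (p - 4) / 16 * n ^ 2 / L ^ 2 by ring,
    ← rpow_mul_natCast (by positivity), h2, div_rpow (by positivity) (by positivity),
    mul_rpow hk (by positivity), ← rpow_natCast_mul hn, ← rpow_natCast_mul hL, h4]

theorem threshold_eq_rpow {p B n μ : ℝ} (hp : p ≠ 2) (hp' : p ≠ 6) (hB : 0 ≤ B) (hn : 0 ≤ n)
    (hμ : 0 < μ) :
    B ^ ((p - 2) / (6 - p)) * n ^ (4 / (6 - p)) * μ ^ (-((p - 2) / (6 - p)))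
      = (B * n ^ (4 / (p - 2)) / μ) ^ ((6 - p) / (p - 2))⁻¹ := by
  have hp2 : p - 2 ≠ 0 := sub_ne_zero.2 hp
  have hp6 : 6 - p ≠ 0 := sub_ne_zero.2 hp'.symm
  rw [inv_div, div_rpow (by positivity) hμ.le, mul_rpow hB (by positivity), ← rpow_mul hn,
    rpow_neg hμ.le, ← div_eq_mul_inv]
  congr 3
  field_simp

theorem rpow_inv_div_lt_iff {A μ L r : ℝ} (hA : 0 ≤ A) (hμ : 0 < μ) (hL : 0 < L) (hr : 0 < r) :
    (A / μ) ^ r⁻¹ < L ↔ A / L ^ r < μ := by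
  rw [rpow_inv_lt_iff_of_pos (div_nonneg hA hμ.le) hL.le hr, div_lt_iff₀ hμ,
    div_lt_iff₀ (rpow_pos_of_pos hL r), mul_comm]

theorem stmt_9_general (p : ℝ) (hp : 4 < p) (hp' : p < 6) (μ : ℝ) (hμ : 0 < μ)
    (N : ℕ) (L : ℝ)
    (Cp : ℝ)
    (hCp : Cp = ((p * (p - 4) / 16) ^ (2 / (p - 2)) +
      (p / 8) * (p * (p - 4) / 16) ^ ((4 - p) / (p - 2))) ^ ((p - 2) / (6 - p)))
    (hL : Cp * (N : ℝ) ^ (4 / (6 - p)) * μ ^ (-((p - 2) / (6 - p))) < L) :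
    let abar : ℝ := ((N : ℝ) ^ 2 * p * (p - 4) / (16 * L ^ 2)) ^ (1 / (p - 2))
    abar < Real.sqrt (μ / L) ∧
    abar ^ 2 * L + ((N : ℝ) ^ 2 * p / (8 * L)) * abar ^ (4 - p) < μ := by
  intro abar
  have hp4 : 0 < p - 4 := by linarith
  have hp2 : 0 < p - 2 := by linarith
  have hB : 0 ≤ (p * (p - 4) / 16) ^ (2 / (p - 2)) +
      (p / 8) * (p * (p - 4) / 16) ^ ((4 - p) / (p - 2)) := by positivity
  rw [hCp, threshold_eq_rpow (by linarith : 2 < p).ne' hp'.ne hB (Nat.cast_nonneg N) hμ] at hL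
  have hL0 : 0 < L := (rpow_nonneg (by positivity) _).trans_lt hL
  rw [rpow_inv_div_lt_iff (by positivity) hμ hL0 (by positivity), cp_base_eq hp] at hL
  have ha0 : 0 ≤ abar := rpow_nonneg (by positivity) _
  have hcrit : abar ^ (p - 2) = (N : ℝ) ^ 2 * p * (p - 4) / (16 * L ^ 2) := by
    show (_ ^ (1 / (p - 2))) ^ (p - 2) = _
    rw [one_div, rpow_inv_rpow (by positivity) hp2.ne']
  have hE : (p - 2) / (p - 4) * (abar ^ 2 * L) < μ := by
    convert hL using 1
    rw [sq_rpow_critical hp (Nat.cast_nonneg N) hL0.le,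
      show (6 - p) / (p - 2) = 4 / (p - 2) - 1 by field_simp; ring, rpow_sub_one hL0.ne']
    field_simp
  have hsq : abar ^ 2 * L < μ :=
    (le_mul_of_one_le_left (by positivity) ((one_le_div hp4).2 (by linarith))).trans_lt hE
  exact ⟨(lt_sqrt ha0).2 ((lt_div_iff₀ hL0).2 hsq),
    (trialEnergy_eq_of_rpow_sub_two_eq ha0 hL0.ne' (by linarith) hcrit).trans_lt hE⟩

/-- Explicit existence threshold for `p ∈ (4,6)`: if
`L > C_p N^(4/(6-p)) μ^(-(p-2)/(6-p))` then `ā < √(μ/L)` and `g ā < μ`. -/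
theorem stmt_9 (p : ℝ) (hp : 4 < p) (hp' : p < 6) (μ : ℝ) (hμ : 0 < μ)
    (N : ℕ) (hN : 0 < N) (L : ℝ)
    (Cp : ℝ)
    (hCp : Cp = ((p * (p - 4) / 16) ^ (2 / (p - 2)) +
      (p / 8) * (p * (p - 4) / 16) ^ ((4 - p) / (p - 2))) ^ ((p - 2) / (6 - p)))
    (hL : Cp * (N : ℝ) ^ (4 / (6 - p)) * μ ^ (-((p - 2) / (6 - p))) < L) :
    let abar : ℝ := ((N : ℝ) ^ 2 * p * (p - 4) / (16 * L ^ 2)) ^ (1 / (p - 2))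
    abar < Real.sqrt (μ / L) ∧
    abar ^ 2 * L + ((N : ℝ) ^ 2 * p / (8 * L)) * abar ^ (4 - p) < μ :=
  stmt_9_general p hp hp' μ hμ N L Cp hCp hL
end

section
/- Let p ∈ [4,6), μ > 0, L > 0, and K_G > 0. Suppose u satisfies ‖u'‖_{L²}² ≤ L‖u‖_∞^p and ‖u‖_∞ ≤ K_G ‖u‖_{L²}^{1/2} ‖u'‖_{L²}^{1/2} with ‖u‖_{L²}² = μ. Then for every integer n ≥ 0, ‖u'‖_{L²}² ≤ (1/(K_G⁴μ)) · ‖u‖_∞^{4(p/4)^{n+1}} · (K_G⁴μL)^{Σ_{i=0}^{n} (p/4)^i}. -/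
/-!
Write `A = K_G⁴ μ`, `B = L`, `q = p / 4` and `x = ‖u'‖²`, `s = ‖u‖_∞`. The two hypotheses read
`x ≤ B s^(4q)` and `s⁴ ≤ A x`. Raising the second to the power `r ≥ 0` and inserting the first gives
`s^(4r) ≤ (AB)^r s^(4qr)`; applying this with `r = q^(n+1)` to the factor `s^(4 q^(n+1))` of the
`n`-th bound produces the `(n+1)`-st one.
-/

open Real Finset

lemma pow_four_le_of_le_mul_rpow {K m s t : ℝ} (hm : 0 ≤ m) (hs : 0 ≤ s) (ht : 0 ≤ t)
    (h : s ≤ K * m ^ ((1 : ℝ) / 4) * t ^ ((1 : ℝ) / 2)) : s ^ 4 ≤ K ^ 4 * m * t ^ 2 :=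
  calc s ^ 4 ≤ (K * m ^ ((1 : ℝ) / 4) * t ^ ((1 : ℝ) / 2)) ^ 4 := pow_le_pow_left₀ hs h 4
    _ = K ^ 4 * (m ^ ((1 : ℝ) / 4)) ^ 4 * (t ^ ((1 : ℝ) / 2)) ^ 4 := by ring
    _ = K ^ 4 * m * t ^ 2 := by
      rw [← rpow_natCast (m ^ _), ← rpow_natCast (t ^ _), ← rpow_mul hm, ← rpow_mul ht]
      norm_num

section Iteration

variable {A B q s x : ℝ}

lemma rpow_four_mul_le_of_le (hA : 0 ≤ A) (hB : 0 ≤ B) (hs : 0 ≤ s)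
    (hx : x ≤ B * s ^ (4 * q)) (hs4 : s ^ 4 ≤ A * x) {r : ℝ} (hr : 0 ≤ r) :
    s ^ (4 * r) ≤ (A * B) ^ r * s ^ (4 * (q * r)) :=
  calc s ^ (4 * r) = (s ^ 4) ^ r := by rw [rpow_mul hs]; norm_num
    _ ≤ (A * x) ^ r := rpow_le_rpow (by positivity) hs4 hr
    _ ≤ (A * B * s ^ (4 * q)) ^ r := by
      rw [mul_assoc]; gcongr; exact le_trans (by positivity) hs4
    _ = (A * B) ^ r * s ^ (4 * (q * r)) := by
      rw [mul_rpow (by positivity) (by positivity), ← rpow_mul hs, mul_assoc]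

lemma le_inv_mul_rpow_mul_rpow_geom_sum (hA : 0 < A) (hB : 0 < B) (hq : 0 ≤ q) (hs : 0 ≤ s)
    (hx : x ≤ B * s ^ (4 * q)) (hs4 : s ^ 4 ≤ A * x) (n : ℕ) :
    x ≤ 1 / A * s ^ (4 * q ^ (n + 1)) * (A * B) ^ (∑ i ∈ range (n + 1), q ^ i) := by
  induction n with
  | zero =>
    simpa [field, mul_comm] using hx
  | succ n ih =>
    have hstep := rpow_four_mul_le_of_le hA.le hB.le hs hx hs4 (pow_nonneg hq (n + 1))
    rw [← pow_succ'] at hstep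
    calc x ≤ 1 / A * s ^ (4 * q ^ (n + 1)) * (A * B) ^ (∑ i ∈ range (n + 1), q ^ i) := ih
      _ ≤ 1 / A * ((A * B) ^ q ^ (n + 1) * s ^ (4 * q ^ (n + 2))) *
          (A * B) ^ (∑ i ∈ range (n + 1), q ^ i) := by gcongr
      _ = 1 / A * s ^ (4 * q ^ (n + 2)) * (A * B) ^ (∑ i ∈ range (n + 2), q ^ i) := by
        rw [sum_range_succ _ (n + 1), rpow_add (by positivity)]
        ring

end Iteration

theorem stmt_13_general (p : ℝ) (hp : 4 ≤ p) (μ L KG : ℝ)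
    (hμ : 0 < μ) (hL : 0 < L) (hKG : 0 < KG)
    (t s : ℝ) (ht : 0 ≤ t) (hs : 0 ≤ s)
    (h1 : t ^ 2 ≤ L * s ^ p)
    (h2 : s ≤ KG * μ ^ ((1 : ℝ) / 4) * t ^ ((1 : ℝ) / 2)) :
    ∀ n : ℕ, t ^ 2 ≤ (1 / (KG ^ 4 * μ)) * s ^ (4 * (p / 4) ^ (n + 1)) *
      (KG ^ 4 * μ * L) ^ (∑ i ∈ Finset.range (n + 1), (p / 4) ^ i) := by
  have h1' : t ^ 2 ≤ L * s ^ (4 * (p / 4)) := by rwa [mul_div_cancel₀ p four_ne_zero]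
  exact le_inv_mul_rpow_mul_rpow_geom_sum (by positivity) hL (by linarith) hs h1'
    (pow_four_le_of_le_mul_rpow hμ.le hs ht h2)

/-- Inductive inequality of the nonexistence proof: if `t = ‖u'‖_{L²}` and `s = ‖u‖_∞`
satisfy `t² ≤ L s^p` and `s ≤ K_G μ^(1/4) t^(1/2)` (with `‖u‖_{L²}² = μ`), then for all
`n ≥ 0`, `t² ≤ (K_G⁴μ)⁻¹ s^(4(p/4)^(n+1)) (K_G⁴μL)^(Σ_{i=0}^n (p/4)^i)`. -/
theorem stmt_13 (p : ℝ) (hp : 4 ≤ p) (hp' : p < 6) (μ L KG : ℝ)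
    (hμ : 0 < μ) (hL : 0 < L) (hKG : 0 < KG)
    (t s : ℝ) (ht : 0 ≤ t) (hs : 0 ≤ s)
    (h1 : t ^ 2 ≤ L * s ^ p)
    (h2 : s ≤ KG * μ ^ ((1 : ℝ) / 4) * t ^ ((1 : ℝ) / 2)) :
    ∀ n : ℕ, t ^ 2 ≤ (1 / (KG ^ 4 * μ)) * s ^ (4 * (p / 4) ^ (n + 1)) *
      (KG ^ 4 * μ * L) ^ (∑ i ∈ Finset.range (n + 1), (p / 4) ^ i) :=
  stmt_13_general p hp μ L KG hμ hL hKG t s ht hs h1 h2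
end
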